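/- Let X, Y ∈ ℤ^{n×n} be symmetric, ζ, η ∈ ℤⁿ, and let Q be a rational orthogonal matrix with Q X Qᵀ = Y and Q ζ = η, of level ℓ. Let p be a prime with p ∣ ℓ and rank_p(W_{X,ζ}) = n−1. Then there exists t₀ ∈ ℤ such that the polynomial det(λI − X − t₀·ζζᵀ) ∈ ℤ[λ], reduced modulo p, has exactly one root in 𝔽_p. -/

import Mathlib

/-!
Reduce modulo `p`, writing `A` and `b` for the images of `X` and `ζ`. Since the walk matrix
`W = [b, Ab, …, A^{n-1}b]` has rank `n - 1`, its left kernel is a line `⟨v⟩`. By Cayley–Hamilton,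
`v` is orthogonal to every `A^k b`, so by symmetry of `A` the vector `A v` lies in that line too:
`A v = μ v`, and `v ⊥ b`. Hence `μ` is an eigenvalue of `A + t b bᵀ` for every `t`.

For `β ≠ μ`, an eigenvector `x` of `A + t b bᵀ` for `β` cannot be orthogonal to `b` (it would then
be an eigenvector of `A` orthogonal to every `A^k b`, hence a multiple of `v`). Comparing
`(A x₁) ⬝ x₂ = x₁ ⬝ (A x₂)` for eigenvectors `x₁`, `x₂` of `A + t₁ b bᵀ`, `A + t₂ b bᵀ` then gives
`(t₁ - t₂) (b ⬝ x₁) (b ⬝ x₂) = 0`, so each `β ≠ μ` is a root for at most one `t`. There are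
`p - 1` such `β` and `p` values of `t`, so some `t` leaves `μ` as the only root.
-/

open Matrix Polynomial

/-- The walk matrix `[ζ, Xζ, X²ζ, …, X^{n−1}ζ]`: its `j`-th column is `X^j ζ`. -/
def walkMatrix {n : ℕ} {R : Type*} [CommRing R]
    (X : Matrix (Fin n) (Fin n) R) (ζ : Fin n → R) : Matrix (Fin n) (Fin n) R :=
  Matrix.of fun i j => ((X ^ (j : ℕ)) *ᵥ ζ) i

/-- `ℓ` is the level of the rational matrix `Q`: the least positive integer such that
`ℓ • Q` has integer entries. -/
def IsLevel {n : ℕ} (Q : Matrix (Fin n) (Fin n) ℚ) (ℓ : ℕ) : Prop :=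
  (0 < ℓ ∧ ∀ i j, ∃ z : ℤ, (ℓ : ℚ) * Q i j = (z : ℚ)) ∧
    ∀ m : ℕ, 0 < m → (∀ i j, ∃ z : ℤ, (m : ℚ) * Q i j = (z : ℚ)) → ℓ ≤ m

namespace Matrix

section Field

variable {m n : Type*} [Fintype m] [Fintype n] {K : Type*} [Field K]

theorem isRoot_charpoly_iff_exists_mulVec_eq_smul [DecidableEq n] {A : Matrix n n K} {β : K} :
    A.charpoly.IsRoot β ↔ ∃ x ≠ 0, A *ᵥ x = β • x := by
  rw [IsRoot.def, eval_charpoly, ← exists_mulVec_eq_zero_iff]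
  simp [sub_mulVec, sub_eq_zero, scalar_apply, eq_comm]

theorem exists_ne_zero_forall_vecMul_eq_zero_iff {M : Matrix m n K}
    (hM : M.rank + 1 = Fintype.card m) :
    ∃ v ≠ 0, ∀ u, u ᵥ* M = 0 ↔ ∃ c : K, c • v = u := by
  have hker : Module.finrank K (LinearMap.ker Mᵀ.mulVecLin) = 1 := by
    have := LinearMap.finrank_range_add_finrank_ker Mᵀ.mulVecLin
    rw [← Matrix.rank, rank_transpose, Module.finrank_fintype_fun_eq_card] at this
    omega
  obtain ⟨⟨v, hv⟩, hv0, hspan⟩ := finrank_eq_one_iff'.mp hker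
  refine ⟨v, fun h => hv0 (Subtype.ext h), fun u => ⟨fun hu => ?_, ?_⟩⟩
  · obtain ⟨c, hc⟩ := hspan ⟨u, by simpa [mulVec_transpose] using hu⟩
    exact ⟨c, congrArg Subtype.val hc⟩
  · rintro ⟨c, rfl⟩
    have hv' : Mᵀ *ᵥ v = 0 := hv
    rw [smul_vecMul, ← mulVec_transpose, hv', smul_zero]

end Field

section CommRing

variable {n : Type*} [Fintype n] {R : Type*} [CommRing R]

theorem add_smul_vecMulVec_mulVec (A : Matrix n n R) (t : R) (b x : n → R) :
    (A + t • vecMulVec b b) *ᵥ x = A *ᵥ x + (t * (b ⬝ᵥ x)) • b := by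
  rw [add_mulVec, smul_mulVec, vecMulVec_mulVec, op_smul_eq_smul, smul_smul]

theorem IsSymm.mulVec_dotProduct {A : Matrix n n R} (hA : A.IsSymm) (u w : n → R) :
    (A *ᵥ u) ⬝ᵥ w = u ⬝ᵥ (A *ᵥ w) := by
  rw [dotProduct_mulVec, ← mulVec_transpose, hA.eq]

theorem IsSymm.dotProduct_pow_mulVec [DecidableEq n] {A : Matrix n n R} (hA : A.IsSymm)
    {x : n → R} {β : R} (hx : A *ᵥ x = β • x) (w : n → R) (k : ℕ) :
    x ⬝ᵥ (A ^ k *ᵥ w) = β ^ k * (x ⬝ᵥ w) := by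
  induction k with
  | zero => simp
  | succ k ih =>
    rw [pow_succ', ← mulVec_mulVec, ← hA.mulVec_dotProduct, hx, smul_dotProduct, ih, smul_eq_mul,
      pow_succ', mul_assoc]

theorem IsSymm.eq_of_add_smul_vecMulVec_mulVec_eq_smul [NoZeroDivisors R] {A : Matrix n n R}
    (hA : A.IsSymm) {b x₁ x₂ : n → R} {t₁ t₂ β : R} (hx₁ : b ⬝ᵥ x₁ ≠ 0) (hx₂ : b ⬝ᵥ x₂ ≠ 0)
    (h₁ : (A + t₁ • vecMulVec b b) *ᵥ x₁ = β • x₁) (h₂ : (A + t₂ • vecMulVec b b) *ᵥ x₂ = β • x₂) :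
    t₁ = t₂ := by
  rw [add_smul_vecMulVec_mulVec] at h₁ h₂
  have hsymm := hA.mulVec_dotProduct x₁ x₂
  rw [eq_sub_of_add_eq h₁, eq_sub_of_add_eq h₂] at hsymm
  simp only [sub_dotProduct, dotProduct_sub, smul_dotProduct, dotProduct_smul, smul_eq_mul,
    dotProduct_comm x₁ b] at hsymm
  have : (t₁ - t₂) * (b ⬝ᵥ x₁) * (b ⬝ᵥ x₂) = 0 := by linear_combination -hsymm
  simpa [hx₁, hx₂, sub_eq_zero] using this

end CommRing

end Matrix

theorem Finite.exists_forall_rel_imp_eq {α : Type*} [Finite α] (μ : α) (r : α → α → Prop)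
    (hr : ∀ β ≠ μ, ∀ t₁ t₂, r β t₁ → r β t₂ → t₁ = t₂) : ∃ t, ∀ β, r β t → β = μ := by
  by_contra! h
  choose g hgr hgμ using h
  have hg : Function.Injective g := fun t₁ t₂ h => hr _ (hgμ t₁) t₁ t₂ (hgr t₁) (h ▸ hgr t₂)
  obtain ⟨t, ht⟩ := Finite.injective_iff_surjective.mp hg μ
  exact hgμ t ht

section walkMatrix

variable {n : ℕ}

theorem vecMul_walkMatrix_apply {R : Type*} [CommRing R] (A : Matrix (Fin n) (Fin n) R)
    (b u : Fin n → R) (j : Fin n) : (u ᵥ* walkMatrix A b) j = u ⬝ᵥ (A ^ (j : ℕ) *ᵥ b) :=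
  rfl

theorem walkMatrix_map {R S : Type*} [CommRing R] [CommRing S] (f : R →+* S)
    (A : Matrix (Fin n) (Fin n) R) (b : Fin n → R) :
    (walkMatrix A b).map f = walkMatrix (A.map f) (f ∘ b) := by
  ext i j
  simp [walkMatrix, RingHom.map_mulVec, ← Matrix.map_pow]

theorem dotProduct_pow_mulVec_eq_zero_of_vecMul_walkMatrix_eq_zero {R : Type*} [CommRing R]
    {A : Matrix (Fin n) (Fin n) R} {b u : Fin n → R} (h : u ᵥ* walkMatrix A b = 0) (k : ℕ) :
    u ⬝ᵥ (A ^ k *ᵥ b) = 0 := by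
  nontriviality R
  rcases Nat.eq_zero_or_pos n with rfl | hn
  · simp [dotProduct]
  have hdeg : (X ^ k %ₘ A.charpoly).natDegree < n := by
    have hdim : A.charpoly.natDegree = n := by rw [charpoly_natDegree_eq_dim, Fintype.card_fin]
    have hne : A.charpoly ≠ 1 := fun h1 => by rw [h1, natDegree_one] at hdim; omega
    exact (natDegree_modByMonic_lt _ A.charpoly_monic hne).trans_eq hdim
  rw [pow_eq_aeval_mod_charpoly, aeval_eq_sum_range' hdeg, sum_mulVec, dotProduct_sum]
  refine Finset.sum_eq_zero fun i hi => ?_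
  rw [smul_mulVec, dotProduct_smul, ← vecMul_walkMatrix_apply A b u ⟨i, Finset.mem_range.mp hi⟩,
    h, Pi.zero_apply, smul_zero]

variable {K : Type*} [Field K] {A : Matrix (Fin n) (Fin n) K} {b : Fin n → K}

theorem exists_eigenvector_of_rank_walkMatrix (hA : A.IsSymm) (hn : n ≠ 0)
    (hW : (walkMatrix A b).rank = n - 1) :
    ∃ v ≠ 0, ∃ μ : K, A *ᵥ v = μ • v ∧ b ⬝ᵥ v = 0 ∧
      ∀ β ≠ μ, ∀ x, A *ᵥ x = β • x → b ⬝ᵥ x = 0 → x = 0 := by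
  obtain ⟨v, hv0, hker⟩ := exists_ne_zero_forall_vecMul_eq_zero_iff (M := walkMatrix A b)
    (by rw [hW, Fintype.card_fin]; omega)
  have hvK := dotProduct_pow_mulVec_eq_zero_of_vecMul_walkMatrix_eq_zero
    ((hker v).2 ⟨1, one_smul K v⟩)
  obtain ⟨μ, hμ⟩ := (hker (A *ᵥ v)).1 <| funext fun j => by
    rw [vecMul_walkMatrix_apply, hA.mulVec_dotProduct, mulVec_mulVec, ← pow_succ', hvK,
      Pi.zero_apply]
  refine ⟨v, hv0, μ, hμ.symm, by simpa [dotProduct_comm] using hvK 0, fun β hβ x hx hbx => ?_⟩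
  obtain ⟨c, rfl⟩ := (hker x).1 <| funext fun j => by
    rw [vecMul_walkMatrix_apply, hA.dotProduct_pow_mulVec hx, dotProduct_comm, hbx, mul_zero,
      Pi.zero_apply]
  have hcv : (c * (μ - β)) • v = 0 := by
    rw [mul_sub, sub_smul, mul_smul, hμ, ← mulVec_smul, hx, mul_comm, mul_smul, sub_self]
  have hc : c * (μ - β) = 0 := (smul_eq_zero.mp hcv).resolve_right hv0
  rw [(mul_eq_zero.mp hc).resolve_right (sub_ne_zero.mpr hβ.symm), zero_smul]

theorem exists_unique_isRoot_charpoly_add_smul_vecMulVec [Finite K] (hA : A.IsSymm) (hn : n ≠ 0)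
    (hW : (walkMatrix A b).rank = n - 1) :
    ∃ t : K, ∃! β : K, (A + t • vecMulVec b b).charpoly.IsRoot β := by
  obtain ⟨v, hv0, μ, hμ, hbv, horth⟩ := exists_eigenvector_of_rank_walkMatrix hA hn hW
  have hroot (t : K) : (A + t • vecMulVec b b).charpoly.IsRoot μ :=
    isRoot_charpoly_iff_exists_mulVec_eq_smul.2
      ⟨v, hv0, by rw [add_smul_vecMulVec_mulVec, hbv, mul_zero, zero_smul, add_zero, hμ]⟩
  have hdot {β t : K} {x : Fin n → K} (hβ : β ≠ μ) (hx : x ≠ 0)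
      (h : (A + t • vecMulVec b b) *ᵥ x = β • x) : b ⬝ᵥ x ≠ 0 := fun hbx =>
    hx <| horth β hβ x
      (by rwa [add_smul_vecMulVec_mulVec, hbx, mul_zero, zero_smul, add_zero] at h) hbx
  obtain ⟨t, ht⟩ := Finite.exists_forall_rel_imp_eq μ
    (fun β t => (A + t • vecMulVec b b).charpoly.IsRoot β) fun β hβ t₁ t₂ h₁ h₂ => by
      obtain ⟨x₁, hx₁, h₁⟩ := isRoot_charpoly_iff_exists_mulVec_eq_smul.1 h₁
      obtain ⟨x₂, hx₂, h₂⟩ := isRoot_charpoly_iff_exists_mulVec_eq_smul.1 h₂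
      exact hA.eq_of_add_smul_vecMulVec_mulVec_eq_smul (hdot hβ hx₁ h₁) (hdot hβ hx₂ h₂) h₁ h₂
  exact ⟨t, μ, hroot t, ht⟩

end walkMatrix

theorem IsLevel.eq_one_of_forall_eq_intCast {n : ℕ} {Q : Matrix (Fin n) (Fin n) ℚ} {ℓ : ℕ}
    (hℓ : IsLevel Q ℓ) (hQ : ∀ i j, ∃ z : ℤ, Q i j = z) : ℓ = 1 :=
  le_antisymm (hℓ.2 1 one_pos (by simpa using hQ)) hℓ.1.1

theorem exists_t0_single_root_general
    {n : ℕ} (X : Matrix (Fin n) (Fin n) ℤ) (ζ : Fin n → ℤ)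
    (hXsymm : X.IsSymm)
    (Q : Matrix (Fin n) (Fin n) ℚ)
    (ℓ : ℕ) (hℓ : IsLevel Q ℓ)
    (p : ℕ) [Fact p.Prime] (hpℓ : p ∣ ℓ)
    (hrank : ((walkMatrix X ζ).map (Int.cast : ℤ → ZMod p)).rank = n - 1) :
    ∃ t₀ : ℤ,
      ∃! lam₀ : ZMod p,
        ((X + t₀ • vecMulVec ζ ζ).charpoly.map (Int.castRingHom (ZMod p))).IsRoot lam₀ := by
  have hn : n ≠ 0 := by
    rintro rfl
    have hℓ1 : ℓ = 1 := hℓ.eq_one_of_forall_eq_intCast fun i => i.elim0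
    exact (Fact.out : p.Prime).ne_one (Nat.dvd_one.mp (hℓ1 ▸ hpℓ))
  let f := Int.castRingHom (ZMod p)
  obtain ⟨t, ht⟩ := exists_unique_isRoot_charpoly_add_smul_vecMulVec (hXsymm.map f) hn
    (b := f ∘ ζ) (by rwa [← walkMatrix_map])
  refine ⟨t.cast, ?_⟩
  have hmap : (X + (t.cast : ℤ) • vecMulVec ζ ζ).map f =
      X.map f + t • vecMulVec (f ∘ ζ) (f ∘ ζ) := by
    ext i j
    simp only [map_apply, Matrix.add_apply, Matrix.smul_apply, vecMulVec_apply, smul_eq_mul,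
      map_add, map_mul, Function.comp_apply, f, eq_intCast, ZMod.intCast_zmod_cast]
  rwa [← charpoly_map, hmap]

/-- **Lemma.** Suppose `Q` is a rational orthogonal matrix with `Q X Qᵀ = Y`, `Q ζ = η`, of
level `ℓ`, `p ∣ ℓ` and `rank_p(W_{X,ζ}) = n − 1`. Then there exists `t₀ ∈ ℤ` such that the
characteristic polynomial `det(λI − X − t₀ζζᵀ)`, reduced mod `p`, has exactly one root in
`𝔽_p`. -/
theorem exists_t0_single_root
    {n : ℕ} (X Y : Matrix (Fin n) (Fin n) ℤ) (ζ η : Fin n → ℤ)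
    (hXsymm : X.IsSymm) (hYsymm : Y.IsSymm)
    (Q : Matrix (Fin n) (Fin n) ℚ)
    (hQ : Qᵀ * Q = 1)
    (hQX : Q * X.map (Int.cast : ℤ → ℚ) * Qᵀ = Y.map (Int.cast : ℤ → ℚ))
    (hQζ : Q *ᵥ (fun i => (ζ i : ℚ)) = fun i => (η i : ℚ))
    (ℓ : ℕ) (hℓ : IsLevel Q ℓ)
    (p : ℕ) (hp : p.Prime) [Fact p.Prime] (hpℓ : p ∣ ℓ)
    (hrank : ((walkMatrix X ζ).map (Int.cast : ℤ → ZMod p)).rank = n - 1) :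
    ∃ t₀ : ℤ,
      ∃! lam₀ : ZMod p,
        ((X + t₀ • vecMulVec ζ ζ).charpoly.map (Int.castRingHom (ZMod p))).IsRoot lam₀ :=
  exists_t0_single_root_general X ζ hXsymm Q ℓ hℓ p hpℓ hrank
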